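/- arXiv:1603.09285 — 6 statements merged into one kernel-verified Lean document; each statement's English description precedes it below -/
import Mathlib

section
/- Let z be a point of the hyperbolic upper half-plane ℍ and R > 0. Then the complex number R²/conj(z) has positive imaginary part (equal to R²·Im z/|z|²), hence defines a point w ∈ ℍ, and the distance from z to the geodesic ℓ_R = {u ∈ ℍ : |u| = R} equals half the distance from z to its reflection w: Metric.infDist z ℓ_R = (1/2)·dist z w. -/
/-!
For `u` on `ℓ_R`, `cosh d(z, u) = 1 + |z - u|² / (2 Im z Im u)` together with `|u| = R` gives the
sum-of-squares identity
`sinh² d(z, u) = ((|z|² - R²) / (2 R Im z))² + ((Re u (|z|² + R²) - 2 R² Re z) / (2 R Im z Im u))²`,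
so `sinh d(z, ℓ_R) = ||z|² - R²| / (2 R Im z)`, attained where the second square vanishes.
On the other hand `|z - R²/z̄| = ||z|² - R²| / |z|` and `Im z · Im (R²/z̄) = (R Im z / |z|)²`, so the
formula `sinh (d / 2) = |z - w| / (2 √(Im z Im w))` gives the same value for `sinh (d(z, w) / 2)`.
-/

open UpperHalfPlane

/-- The geodesic `ℓ_R = {u ∈ ℍ : |u| = R}` in the upper half-plane. -/
noncomputable def ell (R : ℝ) : Set ℍ := {u : ℍ | ‖(u : ℂ)‖ = R}

/-- The point `t·i` of the upper half-plane, for `t > 0`. -/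
noncomputable def vpt (t : ℝ) (ht : 0 < t) : ℍ :=
  UpperHalfPlane.mk (t * Complex.I) (by simpa using ht)

open Real

lemma Complex.im_ofReal_sq_div_conj (R : ℝ) (z : ℂ) :
    ((R : ℂ) ^ 2 / starRingEnd ℂ z).im = R ^ 2 * z.im / ‖z‖ ^ 2 := by
  rw [Complex.div_im, Complex.normSq_conj, ← Complex.sq_norm]
  simp [← Complex.ofReal_pow, neg_div]

lemma Complex.norm_sub_ofReal_sq_div_conj (R : ℝ) {z : ℂ} (hz : z ≠ 0) :
    ‖z - (R : ℂ) ^ 2 / starRingEnd ℂ z‖ = |‖z‖ ^ 2 - R ^ 2| / ‖z‖ := by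
  have hconj : starRingEnd ℂ z ≠ 0 := by simpa using hz
  have hsub : z - (R : ℂ) ^ 2 / starRingEnd ℂ z = ((‖z‖ ^ 2 - R ^ 2 : ℝ) : ℂ) / starRingEnd ℂ z := by
    rw [eq_div_iff hconj, sub_mul, div_mul_cancel₀ _ hconj, Complex.mul_conj,
      Complex.normSq_eq_norm_sq]
    push_cast; ring
  rw [hsub, norm_div, Complex.norm_real, Real.norm_eq_abs, Complex.norm_conj]

namespace UpperHalfPlane

lemma sinh_half_dist_of_coe_eq_sq_div_conj {R : ℝ} (hR : 0 < R) {z w : ℍ}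
    (hw : (w : ℂ) = (R : ℂ) ^ 2 / starRingEnd ℂ z) :
    sinh (dist z w / 2) = |‖(z : ℂ)‖ ^ 2 - R ^ 2| / (2 * R * z.im) := by
  have hz : 0 < ‖(z : ℂ)‖ := norm_pos_iff.2 (ne_zero z)
  have hwim : w.im = R ^ 2 * z.im / ‖(z : ℂ)‖ ^ 2 := by
    rw [← coe_im, hw, Complex.im_ofReal_sq_div_conj, coe_im]
  have hsqrt : √(z.im * w.im) = R * z.im / ‖(z : ℂ)‖ := by
    rw [hwim, show z.im * (R ^ 2 * z.im / ‖(z : ℂ)‖ ^ 2) = (R * z.im / ‖(z : ℂ)‖) ^ 2 by ring,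
      sqrt_sq (by have := z.im_pos; positivity)]
  rw [sinh_half_dist, Complex.dist_eq, hw, Complex.norm_sub_ofReal_sq_div_conj R (ne_zero z),
    hsqrt]
  field_simp

lemma sinh_dist_sq_of_norm_eq {R : ℝ} (hR : 0 < R) (z : ℍ) {u : ℍ} (hu : ‖(u : ℂ)‖ = R) :
    sinh (dist z u) ^ 2 = (|‖(z : ℂ)‖ ^ 2 - R ^ 2| / (2 * R * z.im)) ^ 2
      + ((u.re * (‖(z : ℂ)‖ ^ 2 + R ^ 2) - 2 * R ^ 2 * z.re) / (2 * R * z.im * u.im)) ^ 2 := by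
  have hy := z.im_pos
  have hv := u.im_pos
  have hu2 : u.re ^ 2 + u.im ^ 2 = R ^ 2 := by
    rw [← hu, Complex.sq_norm, Complex.normSq_apply, coe_re, coe_im]; ring
  rw [div_pow, sq_abs, ← div_pow, sinh_sq, cosh_dist, Complex.dist_eq, Complex.sq_norm,
    Complex.sq_norm, Complex.normSq_apply, Complex.normSq_apply]
  simp only [Complex.sub_re, Complex.sub_im, coe_re, coe_im]
  field_simp
  linear_combination
    (R ^ 2 * (u.re ^ 2 + u.im ^ 2 + 4 * z.re ^ 2 - 4 * z.re * u.re) - (z.re ^ 2 + z.im ^ 2) ^ 2) * hu2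

lemma exists_mem_ell_re_eq {R p : ℝ} (hp : |p| < R) : ∃ u ∈ ell R, u.re = p := by
  have hpR : p ^ 2 < R ^ 2 := sq_lt_sq' (abs_lt.1 hp).1 (abs_lt.1 hp).2
  refine ⟨⟨⟨p, √(R ^ 2 - p ^ 2)⟩, sqrt_pos.2 (sub_pos.2 hpR)⟩, ?_, rfl⟩
  rw [ell, Set.mem_ofPred_eq, ← sq_eq_sq₀ (norm_nonneg _) ((abs_nonneg p).trans hp.le),
    Complex.sq_norm, Complex.normSq_apply, ← sq, ← sq, sq_sqrt (sub_pos.2 hpR).le]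
  ring

lemma sinh_infDist_ell {R : ℝ} (hR : 0 < R) (z : ℍ) :
    sinh (Metric.infDist z (ell R)) = |‖(z : ℂ)‖ ^ 2 - R ^ 2| / (2 * R * z.im) := by
  set a := |‖(z : ℂ)‖ ^ 2 - R ^ 2| / (2 * R * z.im)
  have ha : 0 ≤ a := by have := z.im_pos; positivity
  have le_sinh_dist {u : ℍ} (hu : u ∈ ell R) : a ≤ sinh (dist z u) := by
    rw [← pow_le_pow_iff_left₀ ha (sinh_nonneg_iff.2 dist_nonneg) two_ne_zero,
      sinh_dist_sq_of_norm_eq hR z hu]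
    exact le_add_of_nonneg_right (sq_nonneg _)
  obtain ⟨m, hm, hm_re⟩ : ∃ m ∈ ell R, m.re = 2 * R ^ 2 * z.re / (‖(z : ℂ)‖ ^ 2 + R ^ 2) := by
    refine exists_mem_ell_re_eq ?_
    have hN : ‖(z : ℂ)‖ ^ 2 = z.re ^ 2 + z.im ^ 2 := by
      rw [Complex.sq_norm, Complex.normSq_apply, coe_re, coe_im]; ring
    have hden : 0 < ‖(z : ℂ)‖ ^ 2 + R ^ 2 := by positivity
    rw [abs_div, abs_of_pos hden, div_lt_iff₀ hden, abs_mul, abs_of_pos (by positivity), hN]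
    nlinarith [sq_nonneg (|z.re| - R), sq_abs z.re, z.im_pos, sq_pos_of_pos z.im_pos]
  have sinh_dist_foot : sinh (dist z m) = a := by
    rw [← sq_eq_sq₀ (sinh_nonneg_iff.2 dist_nonneg) ha, sinh_dist_sq_of_norm_eq hR z hm, hm_re,
      div_mul_cancel₀ _ (by positivity), sub_self, zero_div, zero_pow two_ne_zero, add_zero]
  have infDist_eq : Metric.infDist z (ell R) = dist z m :=
    le_antisymm (Metric.infDist_le_dist_of_mem hm) ((Metric.le_infDist ⟨m, hm⟩).2 fun u hu ↦
      sinh_le_sinh.1 (sinh_dist_foot ▸ le_sinh_dist hu))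
  rw [infDist_eq, sinh_dist_foot]

end UpperHalfPlane

/-- The reflection `R²/conj z` of `z` across the geodesic `ℓ_R` lies in `ℍ`
(its imaginary part is `R²·Im z/|z|²`), and the distance from `z` to `ℓ_R` is half
the distance from `z` to that reflection. -/
theorem stmt2 (z : ℍ) (R : ℝ) (hR : 0 < R) :
    ∃ hw : 0 < (((R : ℂ) ^ 2) / (starRingEnd ℂ) (z : ℂ)).im,
      (((R : ℂ) ^ 2) / (starRingEnd ℂ) (z : ℂ)).im = R ^ 2 * z.im / ‖(z : ℂ)‖ ^ 2 ∧
      Metric.infDist z (ell R) =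
        (1 / 2) * dist z (UpperHalfPlane.mk (((R : ℂ) ^ 2) / (starRingEnd ℂ) (z : ℂ)) hw) := by
  have hw : 0 < ((R : ℂ) ^ 2 / starRingEnd ℂ z).im := by
    have := norm_pos_iff.2 (ne_zero z)
    rw [Complex.im_ofReal_sq_div_conj]
    exact div_pos (mul_pos (pow_pos hR 2) z.im_pos) (pow_pos this 2)
  refine ⟨hw, Complex.im_ofReal_sq_div_conj R z, ?_⟩
  rw [← sinh_inj, sinh_infDist_ell hR, one_div_mul_eq_div,
    sinh_half_dist_of_coe_eq_sq_div_conj hR rfl]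
end

section
/- For every r > 0, the curve {z ∈ ℍ : |z² + 1| = 2r} in the hyperbolic upper half-plane (the ‘circle’ of the focus/directrix definition, with focus i) is not a hyperbolic metric circle: there do not exist a center c ∈ ℍ and a radius ρ > 0 such that {z ∈ ℍ : |z² + 1| = 2r} = {z ∈ ℍ : dist z c = ρ}. -/
/-!
A hyperbolic circle with center `c` and radius `ρ` is a Euclidean circle all of whose
points have imaginary part at least `c.im / exp ρ`. When `2r ≥ 1` the curve `|z² + 1| = 2r`
runs down to the real axis (at `±√(2r - 1)`), so it is not bounded away from it. When
`2r < 1` it is the upper oval of a Cassini oval, and its four points `i√(1 + 2r)`,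
`i√(1 - 2r)`, `±r + i√(1 - r²)` lie on no common Euclidean circle.
-/

open UpperHalfPlane

open Real

lemma Complex.norm_mk_sq_add_one_eq {x y R : ℝ} (hR : 0 ≤ R)
    (h : (x ^ 2 - y ^ 2 + 1) ^ 2 + (2 * x * y) ^ 2 = R ^ 2) :
    ‖(⟨x, y⟩ : ℂ) ^ 2 + 1‖ = R := by
  rw [Complex.norm_def, ← Real.sqrt_sq hR, ← h]
  congr 1
  simp [Complex.normSq_apply, sq]
  ring

lemma Complex.sq_add_sq_eq_of_dist_eq {w p : ℂ} {R : ℝ} (h : dist w p = R) :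
    (w.re - p.re) ^ 2 + (w.im - p.im) ^ 2 = R ^ 2 := by
  rw [← h, Complex.dist_eq_re_im, Real.sq_sqrt (by positivity)]

theorem not_subset_sphere_of_two_mul_lt_one {r : ℝ} (hr : 0 < r) (h : 2 * r < 1) (p : ℂ)
    (R : ℝ) : ¬ {w : ℂ | 0 < w.im ∧ ‖w ^ 2 + 1‖ = 2 * r} ⊆ Metric.sphere p R := by
  intro hsph
  obtain ⟨s, hs0, hs⟩ : ∃ s, 0 < s ∧ s ^ 2 = 1 + 2 * r :=
    ⟨√(1 + 2 * r), by positivity, Real.sq_sqrt (by linarith)⟩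
  obtain ⟨t, ht0, ht⟩ : ∃ t, 0 < t ∧ t ^ 2 = 1 - 2 * r :=
    ⟨√(1 - 2 * r), Real.sqrt_pos.2 (by linarith), Real.sq_sqrt (by linarith)⟩
  obtain ⟨m, hm0, hm⟩ : ∃ m, 0 < m ∧ m ^ 2 = 1 - r ^ 2 :=
    ⟨√(1 - r ^ 2), Real.sqrt_pos.2 (by nlinarith), Real.sq_sqrt (by nlinarith)⟩
  have on_circle (x y : ℝ) (hy : 0 < y)
      (hxy : (x ^ 2 - y ^ 2 + 1) ^ 2 + (2 * x * y) ^ 2 = (2 * r) ^ 2) :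
      (x - p.re) ^ 2 + (y - p.im) ^ 2 = R ^ 2 :=
    Complex.sq_add_sq_eq_of_dist_eq
      (hsph ⟨hy, Complex.norm_mk_sq_add_one_eq (by positivity) hxy⟩)
  have E₁ := on_circle 0 s hs0 (by linear_combination (s ^ 2 - 1 + 2 * r) * hs)
  have E₂ := on_circle 0 t ht0 (by linear_combination (t ^ 2 - 1 - 2 * r) * ht)
  have E₃ := on_circle r m hm0 (by linear_combination (m ^ 2 - 1 + r ^ 2) * hm)
  have E₄ := on_circle (-r) m hm0 (by linear_combination (m ^ 2 - 1 + r ^ 2) * hm)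
  have hre : p.re = 0 := by
    have : r * p.re = 0 := by linear_combination (E₄ - E₃) / 4
    simpa [hr.ne'] using this
  have him : 2 * p.im = s + t := by
    have : (s - t) * (s + t - 2 * p.im) = 0 := by linear_combination E₁ - E₂
    have hst : s - t ≠ 0 := by nlinarith
    linarith [(mul_eq_zero.1 this).resolve_left hst]
  have hm' : (s + t) * m = 1 + s * t := by
    linear_combination E₁ - E₃ - (m - s) * him + hm - 2 * r * hre
  have hst : s * t = 1 - 2 * r ^ 2 := by
    have hfac : (1 + s * t) * (s * t - 1 + 2 * r ^ 2) = 0 := by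
      linear_combination -(1 + s * t + (s + t) * m) * hm' + (s + t) ^ 2 * hm
        + (1 - r ^ 2) * (hs + ht)
    have hpos : 1 + s * t ≠ 0 := by positivity
    linarith [(mul_eq_zero.1 hfac).resolve_left hpos]
  have : (s * t) ^ 2 = (1 + 2 * r) * (1 - 2 * r) := by rw [mul_pow, hs, ht]
  rw [hst] at this
  have : r ^ 4 = 0 := by linear_combination this / 4
  exact (pow_pos hr 4).ne' this

theorem exists_norm_sq_add_one_eq_and_im_lt {r : ℝ} (hr : 1 ≤ 2 * r) {ε : ℝ} (hε : 0 < ε) :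
    ∃ z : ℍ, ‖(z : ℂ) ^ 2 + 1‖ = 2 * r ∧ z.im < ε := by
  set y := min 1 (ε / 2)
  have hy0 : 0 < y := lt_min one_pos (half_pos hε)
  have hy1 : y ≤ 1 := min_le_left _ _
  obtain ⟨q, hq0, hq⟩ : ∃ q, 0 ≤ q ∧ q ^ 2 = r ^ 2 + y ^ 2 :=
    ⟨√(r ^ 2 + y ^ 2), Real.sqrt_nonneg _, Real.sq_sqrt (by positivity)⟩
  have hq1 : 1 + y ^ 2 ≤ 2 * q := by
    have : y ^ 2 * y ^ 2 ≤ y ^ 2 * 1 := mul_le_mul_of_nonneg_left (by nlinarith) (sq_nonneg y)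
    nlinarith
  obtain ⟨x, hx⟩ : ∃ x, x ^ 2 = 2 * q - 1 - y ^ 2 :=
    ⟨√(2 * q - 1 - y ^ 2), Real.sq_sqrt (by linarith)⟩
  refine ⟨⟨⟨x, y⟩, hy0⟩, Complex.norm_mk_sq_add_one_eq (by linarith) ?_, ?_⟩
  · linear_combination (2 * q + 1 + y ^ 2 + x ^ 2) * hx + 4 * hq
  · exact (min_le_right _ _).trans_lt (half_lt_self hε)

/-- The focus/directrix ‘circle’ `{z : |z² + 1| = 2r}` is not a hyperbolic metric circle. -/
theorem stmt5 (r : ℝ) (hr : 0 < r) :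
    ¬ ∃ (c : ℍ) (ρ : ℝ), 0 < ρ ∧
      {z : ℍ | ‖(z : ℂ) ^ 2 + 1‖ = 2 * r} = {z : ℍ | dist z c = ρ} := by
  rintro ⟨c, ρ, -, hset⟩
  have hsphere (z : ℍ) (hz : ‖(z : ℂ) ^ 2 + 1‖ = 2 * r) : dist z c = ρ :=
    (Set.ext_iff.1 hset z).1 hz
  rcases lt_or_ge (2 * r) 1 with h | h
  · refine not_subset_sphere_of_two_mul_lt_one hr h (c.center ρ) (c.im * sinh ρ) ?_
    rintro w ⟨hw, hwr⟩
    exact dist_eq_iff_dist_coe_center_eq.1 (hsphere ⟨w, hw⟩ hwr)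
  · obtain ⟨z, hz, hlt⟩ :=
      exists_norm_sq_add_one_eq_and_im_lt h (div_pos c.im_pos (exp_pos ρ))
    have := im_div_exp_dist_le c z
    rw [dist_comm, hsphere z hz] at this
    linarith
end

section
/- Let b > 0 and c ∈ ℝ. For a point z = x + iy in the hyperbolic upper half-plane ℍ, the two-focus ellipse condition dist z i + dist z (bi) = c holds if and only if (x² + y² + 1 + √((x² − y² + 1)² + 4x²y²)) · (x² + y² + b² + √((x² − y² + b²)² + 4x²y²)) = 4·b·e^c·y². -/
open UpperHalfPlane

/-!
Squaring `exp (d(z, w) / 2) = (|z - w| + |z - w̄|) / (2 √(Im z · Im w))` expresses `exp (d(z, w))`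
through `|z - w|² + |z - w̄|²` and `|z - w| · |z - w̄| = |(z - w)(z - w̄)|`, which for `w = t i` is
`|z² + t²|`. So `exp (d(z, t i))` is algebraic in `x, y, t`, and taking exponentials turns the
ellipse condition into `exp (d(z, i)) · exp (d(z, b i)) = e^c`.
-/

lemma Complex.norm_sq_add_ofReal_sq (z : ℂ) (t : ℝ) :
    ‖z ^ 2 + (t : ℂ) ^ 2‖ =
      √((z.re ^ 2 - z.im ^ 2 + t ^ 2) ^ 2 + 4 * z.re ^ 2 * z.im ^ 2) := by
  rw [Complex.norm_def, Complex.normSq_apply]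
  congr 1
  simp only [Complex.add_re, Complex.add_im, sq, Complex.mul_re, Complex.mul_im,
    Complex.ofReal_re, Complex.ofReal_im]
  ring

lemma UpperHalfPlane.exp_dist (z w : ℍ) :
    Real.exp (dist z w) =
      (dist (z : ℂ) w + dist (z : ℂ) (starRingEnd ℂ w)) ^ 2 / (4 * (z.im * w.im)) := by
  have hzw : 0 < z.im * w.im := mul_pos z.im_pos w.im_pos
  calc Real.exp (dist z w) = Real.exp (dist z w / 2) ^ 2 := by
        rw [← Real.exp_nat_mul]; congr 1; push_cast; ring
    _ = _ := by rw [exp_half_dist, div_pow, mul_pow, Real.sq_sqrt hzw.le]; norm_num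

@[simp]
lemma coe_vpt (t : ℝ) (ht : 0 < t) : (vpt t ht : ℂ) = t * Complex.I := rfl

@[simp]
lemma vpt_re (t : ℝ) (ht : 0 < t) : (vpt t ht).re = 0 := by
  simp [vpt, UpperHalfPlane.re]

@[simp]
lemma vpt_im (t : ℝ) (ht : 0 < t) : (vpt t ht).im = t := by
  simp [vpt, UpperHalfPlane.im]

lemma I_eq_vpt_one : UpperHalfPlane.I = vpt 1 one_pos := by
  ext
  simp [vpt, UpperHalfPlane.I]

lemma exp_dist_vpt (z : ℍ) (t : ℝ) (ht : 0 < t) :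
    Real.exp (dist z (vpt t ht)) =
      (z.re ^ 2 + z.im ^ 2 + t ^ 2 +
        √((z.re ^ 2 - z.im ^ 2 + t ^ 2) ^ 2 + 4 * z.re ^ 2 * z.im ^ 2)) / (2 * t * z.im) := by
  have him : 0 < z.im := z.im_pos
  have ha : dist (z : ℂ) (vpt t ht) ^ 2 = z.re ^ 2 + (z.im - t) ^ 2 := by
    rw [Complex.dist_eq_re_im, Real.sq_sqrt (by positivity)]
    simp only [coe_re, coe_im, vpt_re, vpt_im]
    ring
  have hb : dist (z : ℂ) (starRingEnd ℂ (vpt t ht)) ^ 2 = z.re ^ 2 + (z.im + t) ^ 2 := by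
    rw [Complex.dist_eq_re_im, Real.sq_sqrt (by positivity)]
    simp only [Complex.conj_re, Complex.conj_im, coe_re, coe_im, vpt_re, vpt_im]
    ring
  have hab : dist (z : ℂ) (vpt t ht) * dist (z : ℂ) (starRingEnd ℂ (vpt t ht)) =
      √((z.re ^ 2 - z.im ^ 2 + t ^ 2) ^ 2 + 4 * z.re ^ 2 * z.im ^ 2) := by
    calc _ = ‖(z : ℂ) ^ 2 + (t : ℂ) ^ 2‖ := by
          rw [Complex.dist_eq, Complex.dist_eq, ← norm_mul]
          congr 1
          simp only [coe_vpt, map_mul, Complex.conj_ofReal, Complex.conj_I]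
          linear_combination (-(t : ℂ) ^ 2) * Complex.I_sq
      _ = _ := Complex.norm_sq_add_ofReal_sq z t
  rw [UpperHalfPlane.exp_dist, vpt_im, div_eq_div_iff (by positivity) (by positivity)]
  linear_combination (2 * t * z.im) * (ha + hb + 2 * hab)

/-- Algebraic form of the two-focus ellipse condition `dist z i + dist z (bi) = c`. -/
theorem stmt6 (b : ℝ) (hb : 0 < b) (c : ℝ) (z : ℍ) (x y : ℝ)
    (hx : x = z.re) (hy : y = z.im) :
    dist z UpperHalfPlane.I + dist z (vpt b hb) = c ↔
      (x ^ 2 + y ^ 2 + 1 + Real.sqrt ((x ^ 2 - y ^ 2 + 1) ^ 2 + 4 * x ^ 2 * y ^ 2)) *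
        (x ^ 2 + y ^ 2 + b ^ 2 + Real.sqrt ((x ^ 2 - y ^ 2 + b ^ 2) ^ 2 + 4 * x ^ 2 * y ^ 2)) =
      4 * b * Real.exp c * y ^ 2 := by
  subst hx hy
  have him : 0 < z.im := z.im_pos
  rw [← Real.exp_eq_exp, Real.exp_add, I_eq_vpt_one, exp_dist_vpt, exp_dist_vpt,
    one_pow, div_mul_div_comm, div_eq_iff (by positivity)]
  constructor <;> intro h <;> linear_combination h
end

section
/- Let r > 0. For a point z = x + iy in the hyperbolic upper half-plane ℍ, the focus/directrix parabola condition dist z i = Metric.infDist z ℓ_r (eccentricity ε = 1, focus i, directrix ℓ_r) holds if and only if 1 − r² + 4x² + (1 − 1/r²)·(x² + y²)² = 0. -/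
open UpperHalfPlane

/-!
For `u` on `ℓ_r` one has `cosh d(z, u) = (|z|² + r² - 2 Re z Re u) / (2 Im z Im u)`.
Minimizing over `|u| = r` is a Cauchy–Schwarz problem; it gives
`cosh d(z, ℓ_r) = √Q / (2 r Im z)` with `Q = (|z|² - r²)² + (2 r Im z)²`, attained at
`u = (2 r² Re z + i r √Q) / (|z|² + r²)`. Since `cosh d(z, i) = (|z|² + 1) / (2 Im z)` and
`cosh` is injective on `[0, ∞)`, the parabola condition reads `r (|z|² + 1) = √Q`, and squaring
gives the quartic.
-/

open Real

theorem Metric.infDist_eq_dist_of_forall_dist_le {α : Type*} [PseudoMetricSpace α] {x y : α}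
    {s : Set α} (hy : y ∈ s) (hmin : ∀ v ∈ s, dist x y ≤ dist x v) :
    Metric.infDist x s = dist x y :=
  le_antisymm (Metric.infDist_le_dist_of_mem hy) ((Metric.le_infDist ⟨y, hy⟩).2 hmin)

theorem mul_sqrt_le_of_sq_add_sq_eq {a b r : ℝ} (x y : ℝ) (hb : 0 ≤ b) (hr : 0 ≤ r)
    (hab : a ^ 2 + b ^ 2 = r ^ 2) :
    b * √((x ^ 2 + y ^ 2 - r ^ 2) ^ 2 + (2 * r * y) ^ 2) ≤
      r * (x ^ 2 + y ^ 2 + r ^ 2 - 2 * x * a) := by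
  have hN : 0 ≤ r * (x ^ 2 + y ^ 2 + r ^ 2 - 2 * x * a) := by
    have : x ^ 2 + y ^ 2 + r ^ 2 - 2 * x * a = (x - a) ^ 2 + y ^ 2 + b ^ 2 := by
      linear_combination -hab
    rw [this]; positivity
  -- Lagrange's identity, once `b²` is replaced by `r² - a²`
  have hsq : (r * (x ^ 2 + y ^ 2 + r ^ 2 - 2 * x * a)) ^ 2
      - (b * √((x ^ 2 + y ^ 2 - r ^ 2) ^ 2 + (2 * r * y) ^ 2)) ^ 2
      = (a * (x ^ 2 + y ^ 2 + r ^ 2) - 2 * r ^ 2 * x) ^ 2 := by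
    rw [mul_pow b, sq_sqrt (by positivity)]
    linear_combination (4 * r ^ 2 * x ^ 2 - (x ^ 2 + y ^ 2 + r ^ 2) ^ 2) * hab
  exact (pow_le_pow_iff_left₀ (by positivity) hN two_ne_zero).1
    (sub_nonneg.1 (hsq ▸ sq_nonneg _))

namespace UpperHalfPlane

theorem cosh_dist_I (z : ℍ) : cosh (dist z I) = (z.re ^ 2 + z.im ^ 2 + 1) / (2 * z.im) := by
  rw [cosh_dist', I_re, I_im]
  ring_nf

theorem re_sq_add_im_sq_of_mem_ell {r : ℝ} {u : ℍ} (hu : u ∈ ell r) :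
    u.re ^ 2 + u.im ^ 2 = r ^ 2 := by
  rw [← hu, Complex.sq_norm, Complex.normSq_apply, coe_re, coe_im]
  ring

theorem mem_ell_of_re_sq_add_im_sq {r : ℝ} (hr : 0 ≤ r) {u : ℍ}
    (hu : u.re ^ 2 + u.im ^ 2 = r ^ 2) : u ∈ ell r := by
  change ‖(u : ℂ)‖ = r
  rw [Complex.norm_eq_sqrt_sq_add_sq, coe_re, coe_im, hu, sqrt_sq hr]

theorem cosh_dist_of_mem_ell {r : ℝ} (z : ℍ) {u : ℍ} (hu : u ∈ ell r) :
    cosh (dist z u) = (z.re ^ 2 + z.im ^ 2 + r ^ 2 - 2 * z.re * u.re) / (2 * z.im * u.im) := by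
  rw [cosh_dist', ← re_sq_add_im_sq_of_mem_ell hu]
  ring

noncomputable def coshDistEll (r : ℝ) (z : ℍ) : ℝ :=
  √((z.re ^ 2 + z.im ^ 2 - r ^ 2) ^ 2 + (2 * r * z.im) ^ 2) / (2 * r * z.im)

theorem coshDistEll_le_cosh_dist {r : ℝ} (hr : 0 < r) (z : ℍ) {u : ℍ} (hu : u ∈ ell r) :
    coshDistEll r z ≤ cosh (dist z u) := by
  rw [coshDistEll, cosh_dist_of_mem_ell z hu,
    div_le_div_iff₀ (by positivity) (by positivity)]
  have h := mul_sqrt_le_of_sq_add_sq_eq z.re z.im u.im_pos.le hr.le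
    (re_sq_add_im_sq_of_mem_ell hu)
  nlinarith [mul_le_mul_of_nonneg_left h (by positivity : (0 : ℝ) ≤ 2 * z.im)]

theorem exists_mem_ell_cosh_dist_eq {r : ℝ} (hr : 0 < r) (z : ℍ) :
    ∃ u ∈ ell r, cosh (dist z u) = coshDistEll r z := by
  have hQ : 0 ≤ (z.re ^ 2 + z.im ^ 2 - r ^ 2) ^ 2 + (2 * r * z.im) ^ 2 := by positivity
  -- the equality case `a (|z|² + r²) = 2 r² Re z` of `mul_sqrt_le_of_sq_add_sq_eq`
  let u : ℍ := ⟨⟨2 * r ^ 2 * z.re / (z.re ^ 2 + z.im ^ 2 + r ^ 2),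
    r * √((z.re ^ 2 + z.im ^ 2 - r ^ 2) ^ 2 + (2 * r * z.im) ^ 2) /
      (z.re ^ 2 + z.im ^ 2 + r ^ 2)⟩, by positivity⟩
  have hu : u ∈ ell r := by
    refine mem_ell_of_re_sq_add_im_sq hr.le ?_
    change (2 * r ^ 2 * z.re / _) ^ 2 + (r * √_ / _) ^ 2 = r ^ 2
    rw [div_pow, div_pow, mul_pow r, sq_sqrt hQ]
    field_simp
    ring
  refine ⟨u, hu, ?_⟩
  rw [cosh_dist_of_mem_ell z hu, coshDistEll]
  change (_ - 2 * z.re * (2 * r ^ 2 * z.re / _)) / (2 * z.im * (r * √_ / _)) = _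
  rw [div_eq_div_iff (by positivity) (by positivity)]
  field_simp
  rw [sq_sqrt (by positivity)]
  ring

theorem cosh_infDist_ell {r : ℝ} (hr : 0 < r) (z : ℍ) :
    cosh (Metric.infDist z (ell r)) = coshDistEll r z := by
  obtain ⟨u, hu, hcosh⟩ := exists_mem_ell_cosh_dist_eq hr z
  rw [Metric.infDist_eq_dist_of_forall_dist_le hu, hcosh]
  intro v hv
  have := hcosh ▸ coshDistEll_le_cosh_dist hr z hv
  simpa [abs_of_nonneg dist_nonneg] using Real.cosh_le_cosh.1 this

end UpperHalfPlane

/-- Algebraic form of the focus/directrix parabola condition `dist z i = d(z, ℓ_r)`. -/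
theorem stmt12 (r : ℝ) (hr : 0 < r) (z : ℍ) (x y : ℝ) (hx : x = z.re) (hy : y = z.im) :
    dist z UpperHalfPlane.I = Metric.infDist z (ell r) ↔
      1 - r ^ 2 + 4 * x ^ 2 + (1 - 1 / r ^ 2) * (x ^ 2 + y ^ 2) ^ 2 = 0 := by
  subst hx hy
  rw [← Real.cosh_injOn.eq_iff dist_nonneg Metric.infDist_nonneg, cosh_dist_I,
    cosh_infDist_ell hr, coshDistEll, ← mul_div_mul_left _ (2 * z.im) hr.ne', mul_left_comm,
    ← mul_assoc, div_left_inj' (by positivity), eq_comm,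
    sqrt_eq_iff_eq_sq (by positivity) (by positivity)]
  constructor <;> intro h
  · field_simp
    linear_combination -h
  · field_simp at h
    linear_combination -h
end

section
/- Fix a point z = x + iy in the hyperbolic upper half-plane ℍ. Then, as b → 0 from the right, dist z i + dist z (bi) + log b tends to log((x² + y² + 1 + √((x² − y² + 1)² + 4x²y²))·(x² + y²) / (2y²)). (Consequently, the two-focus parabola with fixed focus i, obtained as the limit of two-focus ellipses with foci i and bi keeping b·e^c = C/2 constant as b → 0⁺, is the curve (x² + y² + 1 + √((x² − y² + 1)² + 4x²y²))·(x² + y²) = C·y².) -/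
open UpperHalfPlane

/-- The point `t·i` of `ℍ` for `t > 0`, extended by a junk value elsewhere. -/
noncomputable def vpt' (t : ℝ) : ℍ :=
  if ht : 0 < t then vpt t ht else UpperHalfPlane.I

open ComplexConjugate

/-!
Writing `exp (d/2) = sinh (d/2) + cosh (d/2)` turns the hyperbolic distance into
`d(z, w) = log ((|z - w| + |z - w̄|)² / (4 Im z Im w))`. For `w = bi` the factor `1/b` inside the
logarithm is cancelled by `log b`, and what remains is continuous in `b` with value
`log (|z|² / Im z)` at `b = 0`. Adding `d(z, i)` and using `|z - i|² + |z + i|² = 2(|z|² + 1)`,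
`|z - i| |z + i| = |z² + 1|` gives the closed form.
-/

namespace Complex

theorem norm_sub_I_add_norm_add_I_sq (z : ℂ) :
    (‖z - I‖ + ‖z + I‖) ^ 2 = 2 * (‖z‖ ^ 2 + 1) + 2 * ‖z ^ 2 + 1‖ := by
  have hprod : (z - I) * (z + I) = z ^ 2 + 1 := by
    linear_combination -I_sq
  have hpar := parallelogram_law_with_norm ℝ z I
  rw [norm_I] at hpar
  rw [← hprod, norm_mul]
  linear_combination hpar

theorem norm_sq_add_one_eq_sqrt (z : ℂ) :
    ‖z ^ 2 + 1‖ = √((z.re ^ 2 - z.im ^ 2 + 1) ^ 2 + 4 * z.re ^ 2 * z.im ^ 2) := by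
  rw [norm_def]
  congr 1
  simp only [normSq_apply, add_re, add_im, one_re, one_im, sq, mul_re, mul_im]
  ring

end Complex

namespace UpperHalfPlane

theorem dist_eq_log (z w : ℍ) :
    dist z w = Real.log
      ((dist (z : ℂ) w + dist (z : ℂ) (conj (w : ℂ))) ^ 2 / (4 * z.im * w.im)) := by
  have hexp : Real.exp (dist z w) = Real.exp (dist z w / 2) ^ 2 := by
    rw [sq, ← Real.exp_add, add_halves]
  rw [← Real.log_exp (dist z w), hexp, exp_half_dist, div_pow, mul_pow,
    Real.sq_sqrt (mul_pos z.im_pos w.im_pos).le]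
  ring_nf

end UpperHalfPlane

theorem coe_vpt'_of_pos {t : ℝ} (ht : 0 < t) : ((vpt' t : ℍ) : ℂ) = t * Complex.I := by
  rw [vpt', dif_pos ht]
  rfl

theorem vpt'_one : vpt' 1 = UpperHalfPlane.I :=
  UpperHalfPlane.ext (by rw [coe_vpt'_of_pos one_pos]; simp)

theorem dist_vpt' (z : ℍ) {t : ℝ} (ht : 0 < t) :
    dist z (vpt' t) = Real.log
      ((‖(z : ℂ) - t * Complex.I‖ + ‖(z : ℂ) + t * Complex.I‖) ^ 2 / (4 * z.im * t)) := by
  have him : (vpt' t).im = t := by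
    rw [← UpperHalfPlane.coe_im, coe_vpt'_of_pos ht]; simp
  rw [UpperHalfPlane.dist_eq_log, him, coe_vpt'_of_pos ht, dist_eq_norm, dist_eq_norm, map_mul,
    Complex.conj_ofReal, Complex.conj_I, mul_neg, sub_neg_eq_add]

theorem dist_I_eq_log (z : ℍ) :
    dist z UpperHalfPlane.I = Real.log
      ((‖(z : ℂ) - Complex.I‖ + ‖(z : ℂ) + Complex.I‖) ^ 2 / (4 * z.im)) := by
  simpa [vpt'_one] using dist_vpt' z one_pos

theorem tendsto_dist_vpt'_add_log (z : ℍ) :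
    Filter.Tendsto (fun b : ℝ => dist z (vpt' b) + Real.log b) (nhdsWithin 0 (Set.Ioi 0))
      (nhds (Real.log (‖(z : ℂ)‖ ^ 2 / z.im))) := by
  set F : ℝ → ℝ := fun b =>
    (‖(z : ℂ) - b * Complex.I‖ + ‖(z : ℂ) + b * Complex.I‖) ^ 2 / (4 * z.im)
  have hF0 : F 0 = ‖(z : ℂ)‖ ^ 2 / z.im := by
    simp only [F, Complex.ofReal_zero, zero_mul, sub_zero, add_zero]
    ring
  have hF0_ne : F 0 ≠ 0 := by
    rw [hF0]
    exact div_ne_zero (pow_ne_zero _ (norm_ne_zero_iff.mpr z.ne_zero)) z.im_ne_zero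
  have hF : Continuous F := by fun_prop
  have hlogF : Filter.Tendsto (fun b => Real.log (F b)) (nhdsWithin 0 (Set.Ioi 0))
      (nhds (Real.log (‖(z : ℂ)‖ ^ 2 / z.im))) := by
    rw [← hF0]
    exact ((Real.continuousAt_log hF0_ne).comp hF.continuousAt).tendsto.mono_left
      nhdsWithin_le_nhds
  refine hlogF.congr' ?_
  filter_upwards [self_mem_nhdsWithin] with b (hb : 0 < b)
  have hpos : 0 < ‖(z : ℂ) + b * Complex.I‖ := norm_pos_iff.mpr fun h => by
    have := congrArg Complex.im h
    simp at this
    linarith [z.im_pos]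
  rw [dist_vpt' z hb, ← Real.log_mul (by positivity) hb.ne']
  congr 1
  simp only [F]
  field_simp

/-- As `b → 0⁺`, `dist z i + dist z (bi) + log b` tends to
`log((x² + y² + 1 + √((x² − y² + 1)² + 4x²y²))·(x² + y²) / (2y²))`. -/
theorem stmt14 (z : ℍ) (x y : ℝ) (hx : x = z.re) (hy : y = z.im) :
    Filter.Tendsto
      (fun b : ℝ => dist z UpperHalfPlane.I + dist z (vpt' b) + Real.log b)
      (nhdsWithin 0 (Set.Ioi 0))
      (nhds (Real.log
        ((x ^ 2 + y ^ 2 + 1 + Real.sqrt ((x ^ 2 - y ^ 2 + 1) ^ 2 + 4 * x ^ 2 * y ^ 2)) *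
          (x ^ 2 + y ^ 2) / (2 * y ^ 2)))) := by
  subst hx hy
  have hnorm : ‖(z : ℂ)‖ ^ 2 = z.re ^ 2 + z.im ^ 2 := by
    rw [← Complex.normSq_eq_norm_sq, Complex.normSq_apply, UpperHalfPlane.coe_re,
      UpperHalfPlane.coe_im]
    ring
  have hlim := (tendsto_dist_vpt'_add_log z).const_add (dist z UpperHalfPlane.I)
  simp only [← add_assoc] at hlim
  convert hlim using 2
  rw [dist_I_eq_log, Complex.norm_sub_I_add_norm_add_I_sq, Complex.norm_sq_add_one_eq_sqrt,
    hnorm, UpperHalfPlane.coe_re, UpperHalfPlane.coe_im,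
    ← Real.log_mul (by positivity) (by positivity)]
  congr 1
  field_simp
  ring
end

section
/- Let r > 1 and consider the degenerate focus/directrix hyperbola with eccentricity ε equal to r: S = {z ∈ ℍ : sinh(dist z i) = r·sinh(Metric.infDist z ℓ_r)}. Then (a) S = {z = x + iy ∈ ℍ : (r² + 1)x² + (r² − 1)y² = (r⁴ − 1)/2} (a Euclidean ellipse); (b) S meets the imaginary axis in exactly one point: for y > 0, the point iy lies in S if and only if y = √((r² + 1)/2); and (c) S is not a two-focus hyperbola: there are no points a₁ ≠ a₂ in ℍ and no c > 0 with S = {z ∈ ℍ : |dist z a₁ − dist z a₂| = c}. -/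
open UpperHalfPlane

/-!
With `z = x + iy`, the nearest point of `ℓ_r` to `z` gives
`sinh d(z, ℓ_r) = |x² + y² - r²| / (2ry)`, while `cosh d(z, i) = (x² + y² + 1) / (2y)`.
Squaring the focus/directrix condition, the quartic terms cancel and the ellipse equation
remains. The ellipse is connected, being the image of `ℍ` under a radial rescaling. A two-focus
hyperbola `|d(z, a₁) - d(z, a₂)| = c` with `c > 0` is not: since `ℍ` is connected, the continuous
function `d(·, a₁) - d(·, a₂)` takes both values `±c` on it, but never the value `0`.
-/

theorem not_isPreconnected_setOf_abs_dist_sub_dist_eq {X : Type*} [PseudoMetricSpace X]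
    [PreconnectedSpace X] {a₁ a₂ : X} {c : ℝ} (hc : 0 < c)
    (hne : {z | |dist z a₁ - dist z a₂| = c}.Nonempty) :
    ¬ IsPreconnected {z | |dist z a₁ - dist z a₂| = c} := by
  set f : X → ℝ := fun z => dist z a₁ - dist z a₂
  have hf : Continuous f := by fun_prop
  have hc_le : c ≤ dist a₁ a₂ := by
    obtain ⟨z, hz⟩ := hne
    have h := abs_dist_sub_le a₁ a₂ z
    rwa [dist_comm a₁, dist_comm a₂, hz] at h
  have hIcc : Set.Icc (-c) c ⊆ Set.Icc (f a₁) (f a₂) := by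
    refine Set.Icc_subset_Icc ?_ ?_ <;> simp only [f, dist_self, dist_comm a₂] <;> linarith
  have hsurj : ∀ t ∈ Set.Icc (-c) c, ∃ z, f z = t := fun t ht =>
    let ⟨z, _, hz⟩ := isPreconnected_univ.intermediate_value (Set.mem_univ a₁)
      (Set.mem_univ a₂) hf.continuousOn (hIcc ht)
    ⟨z, hz⟩
  obtain ⟨zneg, hzneg⟩ := hsurj (-c) ⟨le_rfl, by linarith⟩
  obtain ⟨zpos, hzpos⟩ := hsurj c ⟨by linarith, le_rfl⟩
  intro hconn
  obtain ⟨z₀, hz₀, hfz₀⟩ := hconn.intermediate_value (f := f)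
    (show |f zneg| = c by rw [hzneg, abs_neg, abs_of_pos hc])
    (show |f zpos| = c by rw [hzpos, abs_of_pos hc]) hf.continuousOn
    (show (0 : ℝ) ∈ Set.Icc (f zneg) (f zpos) by rw [hzneg, hzpos]; constructor <;> linarith)
  have hc₀ : |f z₀| = c := hz₀
  rw [hfz₀, abs_zero] at hc₀
  exact hc.ne hc₀

namespace UpperHalfPlane

open Real

theorem isPreconnected_setOf_ellipse {p q k : ℝ} (hp : 0 < p) (hq : 0 < q)
    (hk : 0 < k) : IsPreconnected {z : ℍ | p * z.re ^ 2 + q * z.im ^ 2 = k} := by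
  have hQ : ∀ z : ℍ, 0 < p * z.re ^ 2 + q * z.im ^ 2 := fun z => by
    have := z.im_pos; positivity
  -- radial projection of `ℍ` onto the ellipse
  set t : ℍ → ℝ := fun z => √(k / (p * z.re ^ 2 + q * z.im ^ 2))
  have ht : ∀ z, 0 < t z := fun z => sqrt_pos.2 (div_pos hk (hQ z))
  have htc : Continuous t :=
    continuous_sqrt.comp (continuous_const.div (by fun_prop) fun z => (hQ z).ne')
  let φ : ℍ → ℍ := fun z => (⟨t z, ht z⟩ : {x : ℝ // 0 < x}) • z
  have hφ : Continuous φ :=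
    Continuous.upperHalfPlaneMk (f := fun z => (t z : ℂ) * z) (by fun_prop) _
  convert isPreconnected_range hφ
  ext w
  constructor
  · intro hw
    have htw : t w = 1 := by
      simp only [t]
      rw [show p * w.re ^ 2 + q * w.im ^ 2 = k from hw, div_self hk.ne', sqrt_one]
    exact ⟨w, by simp only [φ, htw]; exact one_smul _ w⟩
  · rintro ⟨z, rfl⟩
    have h := sq_sqrt (div_pos hk (hQ z)).le
    simp only [Set.mem_ofPred_eq, φ, pos_real_re, pos_real_im]
    calc p * (t z * z.re) ^ 2 + q * (t z * z.im) ^ 2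
        = t z ^ 2 * (p * z.re ^ 2 + q * z.im ^ 2) := by ring
      _ = k := by rw [h, div_mul_cancel₀ _ (hQ z).ne']

lemma mem_ell_iff {r : ℝ} (hr : 0 ≤ r) {u : ℍ} : u ∈ ell r ↔ u.re ^ 2 + u.im ^ 2 = r ^ 2 := by
  rw [ell, Set.mem_ofPred_eq, ← sq_eq_sq₀ (norm_nonneg _) hr, Complex.sq_norm,
    Complex.normSq_apply]
  simp only [coe_re, coe_im, sq]

lemma sqrt_le_mul_cosh_dist_of_mem_ell {r : ℝ} (hr : 0 < r) (z : ℍ) {u : ℍ} (hu : u ∈ ell r) :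
    √((z.re ^ 2 + z.im ^ 2 - r ^ 2) ^ 2 + (2 * r * z.im) ^ 2) ≤
      2 * r * z.im * cosh (dist z u) := by
  rw [mem_ell_iff hr.le] at hu
  set A := z.re ^ 2 + z.im ^ 2 + r ^ 2
  set Q := (z.re ^ 2 + z.im ^ 2 - r ^ 2) ^ 2 + (2 * r * z.im) ^ 2
  have hQ : √Q ^ 2 = Q := sq_sqrt (by positivity)
  have hcosh : 2 * z.im * u.im * cosh (dist z u) = A - 2 * z.re * u.re := by
    have hyb : 0 < 2 * z.im * u.im := by have := z.im_pos; have := u.im_pos; positivity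
    rw [cosh_dist', mul_div_cancel₀ _ hyb.ne']
    linear_combination hu
  have hrhs : 0 ≤ r * (A - 2 * z.re * u.re) := by
    rw [← hcosh]; positivity
  have hdefect : (r * (A - 2 * z.re * u.re)) ^ 2 - (u.im * √Q) ^ 2 =
      (u.re * A - 2 * r ^ 2 * z.re) ^ 2 := by
    rw [mul_pow u.im, hQ]
    linear_combination (-(A ^ 2 - 4 * r ^ 2 * z.re ^ 2)) * hu
  have hle : u.im * √Q ≤ u.im * (2 * r * z.im * cosh (dist z u)) := by
    calc u.im * √Q ≤ r * (A - 2 * z.re * u.re) :=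
          (abs_le_of_sq_le_sq' (by nlinarith [sq_nonneg (u.re * A - 2 * r ^ 2 * z.re)]) hrhs).2
      _ = u.im * (2 * r * z.im * cosh (dist z u)) := by rw [← hcosh]; ring
  exact le_of_mul_le_mul_left hle u.im_pos

lemma exists_mem_ell_mul_cosh_dist_eq {r : ℝ} (hr : 0 < r) (z : ℍ) :
    ∃ u ∈ ell r, 2 * r * z.im * cosh (dist z u) =
      √((z.re ^ 2 + z.im ^ 2 - r ^ 2) ^ 2 + (2 * r * z.im) ^ 2) := by
  have hy := z.im_pos
  set A := z.re ^ 2 + z.im ^ 2 + r ^ 2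
  set Q := (z.re ^ 2 + z.im ^ 2 - r ^ 2) ^ 2 + (2 * r * z.im) ^ 2
  have hA : 0 < A := by positivity
  have hQ : √Q ^ 2 = Q := sq_sqrt (by positivity)
  have hQpos : 0 < √Q := sqrt_pos.2 (by positivity)
  -- the foot of the perpendicular from `z` to `ℓ_r`
  let u : ℍ := ⟨⟨2 * r ^ 2 * z.re / A, r * √Q / A⟩, by dsimp only; positivity⟩
  have hu : u ∈ ell r := by
    rw [mem_ell_iff hr.le]
    change (2 * r ^ 2 * z.re / A) ^ 2 + (r * √Q / A) ^ 2 = r ^ 2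
    field_simp
    rw [hQ]
    ring
  refine ⟨u, hu, ?_⟩
  rw [cosh_dist']
  change 2 * r * z.im * (((z.re - 2 * r ^ 2 * z.re / A) ^ 2 + z.im ^ 2 + (r * √Q / A) ^ 2) /
    (2 * z.im * (r * √Q / A))) = √Q
  field_simp
  rw [hQ]
  ring

lemma infDist_ell {r : ℝ} (hr : 0 < r) (z : ℍ) :
    Metric.infDist z (ell r) = arsinh (|z.re ^ 2 + z.im ^ 2 - r ^ 2| / (2 * r * z.im)) := by
  set s := |z.re ^ 2 + z.im ^ 2 - r ^ 2| / (2 * r * z.im)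
  have hry : 0 < 2 * r * z.im := by have := z.im_pos; positivity
  have hs : 0 ≤ arsinh s := arsinh_nonneg_iff.2 (by positivity)
  have hcosh : 2 * r * z.im * cosh (arsinh s) =
      √((z.re ^ 2 + z.im ^ 2 - r ^ 2) ^ 2 + (2 * r * z.im) ^ 2) := by
    have hQ : (z.re ^ 2 + z.im ^ 2 - r ^ 2) ^ 2 + (2 * r * z.im) ^ 2 =
        (2 * r * z.im) ^ 2 * (1 + s ^ 2) := by
      rw [div_pow, sq_abs]
      field_simp
      ring
    rw [hQ, sqrt_mul (sq_nonneg _), sqrt_sq hry.le, cosh_arsinh]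
  obtain ⟨u₀, hu₀, hu₀_eq⟩ := exists_mem_ell_mul_cosh_dist_eq hr z
  have hdist : dist z u₀ = arsinh s :=
    cosh_injOn dist_nonneg hs (mul_left_cancel₀ hry.ne' (hu₀_eq.trans hcosh.symm))
  refine le_antisymm (hdist ▸ Metric.infDist_le_dist_of_mem hu₀)
    ((Metric.le_infDist ⟨u₀, hu₀⟩).2 fun u hu => ?_)
  have h := sqrt_le_mul_cosh_dist_of_mem_ell hr z hu
  rwa [← hcosh, mul_le_mul_iff_right₀ hry, cosh_le_cosh, abs_of_nonneg hs,
    abs_of_nonneg dist_nonneg] at h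

lemma sinh_dist_I_eq_mul_sinh_infDist_ell_iff {r : ℝ} (hr : 0 < r) (z : ℍ) :
    sinh (dist z I) = r * sinh (Metric.infDist z (ell r)) ↔
      (r ^ 2 + 1) * z.re ^ 2 + (r ^ 2 - 1) * z.im ^ 2 = (r ^ 4 - 1) / 2 := by
  have hy := z.im_pos
  rw [infDist_ell hr, sinh_arsinh, ← sq_eq_sq₀ (sinh_nonneg_iff.2 dist_nonneg) (by positivity),
    sinh_sq, cosh_dist', I_re, I_im, mul_pow, div_pow, div_pow, sq_abs]
  field_simp
  constructor <;> intro h <;> linear_combination h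

@[simp] lemma re_vpt {t : ℝ} (ht : 0 < t) : (vpt t ht).re = 0 := by simp [vpt]

@[simp] lemma im_vpt {t : ℝ} (ht : 0 < t) : (vpt t ht).im = t := by simp [vpt]

end UpperHalfPlane

/-- The degenerate focus/directrix ‘hyperbola’ with `ε = r`: it is a Euclidean ellipse,
meets the imaginary axis in exactly one point, and is not a two-focus hyperbola. -/
theorem stmt19 (r : ℝ) (hr : 1 < r) (S : Set ℍ)
    (hS : S = {z : ℍ | Real.sinh (dist z UpperHalfPlane.I) =
        r * Real.sinh (Metric.infDist z (ell r))}) :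
    (S = {z : ℍ | (r ^ 2 + 1) * z.re ^ 2 + (r ^ 2 - 1) * z.im ^ 2 = (r ^ 4 - 1) / 2}) ∧
    (∀ (y : ℝ) (hy : 0 < y), vpt y hy ∈ S ↔ y = Real.sqrt ((r ^ 2 + 1) / 2)) ∧
    ¬ ∃ (a₁ a₂ : ℍ) (c : ℝ), a₁ ≠ a₂ ∧ 0 < c ∧
        S = {z : ℍ | |dist z a₁ - dist z a₂| = c} := by
  have hr₀ : 0 < r := one_pos.trans hr
  have hr₁ : 0 < r ^ 2 - 1 := by nlinarith
  have hellipse : S = {z : ℍ | (r ^ 2 + 1) * z.re ^ 2 + (r ^ 2 - 1) * z.im ^ 2 =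
      (r ^ 4 - 1) / 2} := by
    rw [hS]
    ext z
    exact sinh_dist_I_eq_mul_sinh_infDist_ell_iff hr₀ z
  have haxis : ∀ (y : ℝ) (hy : 0 < y), vpt y hy ∈ S ↔ y = Real.sqrt ((r ^ 2 + 1) / 2) := by
    intro y hy
    have hfactor : (r ^ 4 - 1) / 2 = (r ^ 2 - 1) * ((r ^ 2 + 1) / 2) := by ring
    rw [hellipse, Set.mem_ofPred_eq, re_vpt, im_vpt, hfactor, zero_pow two_ne_zero, mul_zero,
      zero_add, mul_right_inj' hr₁.ne', eq_comm (a := y), Real.sqrt_eq_iff_mul_self_eq_of_pos hy,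
      sq]
  refine ⟨hellipse, haxis, ?_⟩
  rintro ⟨a₁, a₂, c, -, hc, hhyp⟩
  have hne : S.Nonempty := ⟨_, (haxis _ (Real.sqrt_pos.2 (by positivity))).2 rfl⟩
  have hconn : IsPreconnected S :=
    hellipse ▸ isPreconnected_setOf_ellipse (by positivity) hr₁ (by nlinarith)
  rw [hhyp] at hne hconn
  exact not_isPreconnected_setOf_abs_dist_sub_dist_eq hc hne hconn
end
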